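/- arXiv:1810.10370 — 3 statements merged into one kernel-verified Lean document; each statement's English description precedes it below -/
import Mathlib

section
/- Assume (H1), (H2), (H5), let μ > 0 and ε > 0 satisfy εγ₂ < μ < γ₁, and let a : ℝ → ℝⁿ, b : ℝ → ℝᵐ be Borel measurable. Fix v̄₀ ∈ ℝᵐ and for (û,v̂) ∈ C⁻_{μ/ε}(ℝⁿ×ℝᵐ) define I₁(û,v̂)(t) = ∫_{−∞}^t e^{(A/ε)(t−r)} ε^{−1} U(û_r + a(r), v̂_r + b(r)) dr and I₂(û,v̂)(t) = e^{Bt}v̄₀ − ∫_t^0 e^{B(t−r)} V(û_r + a(r), v̂_r + b(r)) dr for t ≤ 0. Then sup_{t≤0} e^{(μ/ε)t}|I₁(û,v̂)(t)| ≤ M_U/γ₁ and sup_{t≤0} e^{(μ/ε)t}|I₂(û,v̂)(t)| ≤ |v̄₀| + M_V/γ₂; in particular the operator I = (I₁, I₂) maps C⁻_{μ/ε}(ℝⁿ×ℝᵐ) into itself. -/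
/-!
By (H1) the energy `e^{2γ₁ s} ‖e^{sA} x‖²` is nonincreasing, so `‖e^{sA}‖ ≤ e^{-γ₁ s}` for
`s ≥ 0`. Hence the kernel of `I₁` is dominated by `e^{-(γ₁/ε)(t-r)} ε⁻¹ M_U`, whose integral over
`(-∞, t]` is `M_U / γ₁`; likewise (H2) bounds `I₂(t)` by `e^{-γ₂ t} (‖v̄₀‖ + M_V / γ₂)`, and the
weight `e^{(μ/ε) t}` absorbs `e^{-γ₂ t}` because `γ₂ ≤ μ/ε`. Continuity follows from the semigroup
law `e^{(t-r)X} = e^{tX} e^{-rX}`, which turns both integrals into `e^{tX}` applied to a primitive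
of a locally integrable function.
-/

open scoped RealInnerProductSpace
open MeasureTheory Set

section Dissipative

variable {E : Type*} [NormedAddCommGroup E] [InnerProductSpace ℝ E] [CompleteSpace E]

theorem norm_exp_smul_apply_le_of_inner_le {A : E →L[ℝ] E} {γ : ℝ}
    (hA : ∀ x, ⟪A x, x⟫ ≤ -γ * ‖x‖ ^ 2) (x : E) {s : ℝ} (hs : 0 ≤ s) :
    ‖NormedSpace.exp (s • A) x‖ ≤ Real.exp (-γ * s) * ‖x‖ := by
  set y : ℝ → E := fun u => NormedSpace.exp (u • A) x
  have hy : ∀ u, HasDerivAt y (A (y u)) u := fun u => by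
    simpa using (hasDerivAt_exp_smul_const' A u).clm_apply (hasDerivAt_const u x)
  have hφ : ∀ u, HasDerivAt (fun u => Real.exp (2 * γ * u) * ‖y u‖ ^ 2)
      (Real.exp (2 * γ * u) * (2 * γ) * ‖y u‖ ^ 2 + Real.exp (2 * γ * u) * (2 * ⟪y u, A (y u)⟫))
      u := fun u => by
    have := ((hasDerivAt_id u).const_mul (2 * γ)).exp.mul (hy u).norm_sq
    simp only [id, mul_one] at this
    exact this
  have hanti := antitone_of_hasDerivAt_nonpos hφ fun u => by
    show _ ≤ (0 : ℝ)
    have := hA (y u)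
    rw [real_inner_comm] at this
    nlinarith [Real.exp_pos (2 * γ * u)]
  have hs' : Real.exp (2 * γ * s) * ‖y s‖ ^ 2 ≤ ‖x‖ ^ 2 := by simpa [y] using hanti hs
  have he : Real.exp (-γ * s) ^ 2 * Real.exp (2 * γ * s) = 1 := by
    rw [← Real.exp_nat_mul, ← Real.exp_add, ← Real.exp_zero]
    ring_nf
  refine (pow_le_pow_iff_left₀ (norm_nonneg _) (by positivity) two_ne_zero).1 ?_
  calc ‖y s‖ ^ 2 = Real.exp (-γ * s) ^ 2 * (Real.exp (2 * γ * s) * ‖y s‖ ^ 2) := by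
        rw [← mul_assoc, he, one_mul]
    _ ≤ Real.exp (-γ * s) ^ 2 * ‖x‖ ^ 2 := by gcongr
    _ = (Real.exp (-γ * s) * ‖x‖) ^ 2 := (mul_pow _ _ _).symm

theorem norm_exp_smul_le_of_inner_le {A : E →L[ℝ] E} {γ : ℝ}
    (hA : ∀ x, ⟪A x, x⟫ ≤ -γ * ‖x‖ ^ 2) {s : ℝ} (hs : 0 ≤ s) :
    ‖NormedSpace.exp (s • A)‖ ≤ Real.exp (-γ * s) :=
  ContinuousLinearMap.opNorm_le_bound _ (Real.exp_pos _).le fun x =>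
    norm_exp_smul_apply_le_of_inner_le hA x hs

end Dissipative

section Primitive

variable {E : Type*} [NormedAddCommGroup E] [NormedSpace ℝ E] {h : ℝ → E} {b : ℝ}

theorem continuousOn_Iic_intervalIntegral (hh : ∀ a ≤ b, IntegrableOn h (Icc a b)) :
    ContinuousOn (fun t => ∫ r in t..b, h r) (Iic b) := by
  intro t (ht : t ≤ b)
  have hIcc : uIcc (t - 1) b = Icc (t - 1) b := uIcc_of_le (by linarith)
  have hcont := intervalIntegral.continuousOn_primitive_interval_left (μ := volume)
    (hIcc ▸ hh (t - 1) (by linarith))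
  rw [hIcc] at hcont
  refine (hcont t ⟨by linarith, ht⟩).mono_of_mem_nhdsWithin ?_
  rw [← Ici_inter_Iic, inter_comm]
  exact inter_mem_nhdsWithin _ (Ici_mem_nhds (by linarith))

theorem continuousOn_Iic_setIntegral_Iic (hh : IntegrableOn h (Iic b)) :
    ContinuousOn (fun t => ∫ r in Iic t, h r) (Iic b) := by
  refine ((continuousOn_const (c := ∫ r in Iic b, h r)).sub
    (continuousOn_Iic_intervalIntegral fun a _ => hh.mono_set Icc_subset_Iic_self)).congr
    fun t (ht : t ≤ b) => ?_
  rw [Pi.sub_apply,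
    ← intervalIntegral.integral_Iic_sub_Iic (hh.mono_set (Iic_subset_Iic.2 ht)) hh, sub_sub_cancel]

end Primitive

section ClmApply

variable {E F : Type*} [NormedAddCommGroup E] [NormedSpace ℝ E] [NormedAddCommGroup F]
  [NormedSpace ℝ F] {K : ℝ → E →L[ℝ] F} {g : ℝ → E} {s : Set ℝ} {M : ℝ}

theorem integrableOn_clm_apply_of_norm_le (hs : MeasurableSet s) (hK : Continuous K)
    {k : ℝ → ℝ} (hk : IntegrableOn k s) (hKk : ∀ r ∈ s, ‖K r‖ ≤ k r)
    (hg : AEStronglyMeasurable g (volume.restrict s)) (hgM : ∀ r, ‖g r‖ ≤ M) :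
    IntegrableOn (fun r => K r (g r)) s :=
  Integrable.mono' (hk.mul_const M)
    ((ContinuousLinearMap.id ℝ (E →L[ℝ] F)).aestronglyMeasurable_comp₂
      hK.aestronglyMeasurable hg)
    (ae_restrict_of_forall_mem hs fun r hr =>
      ContinuousLinearMap.le_of_opNorm_le_of_le _ (hKk r hr) (hgM r))

theorem integrableOn_clm_apply_of_isCompact (hs : IsCompact s) (hK : Continuous K)
    (hg : AEStronglyMeasurable g (volume.restrict s)) (hgM : ∀ r, ‖g r‖ ≤ M) :
    IntegrableOn (fun r => K r (g r)) s := by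
  obtain ⟨C, hC⟩ := hs.exists_bound_of_continuousOn hK.continuousOn
  exact integrableOn_clm_apply_of_norm_le hs.measurableSet hK
    (integrableOn_const hs.measure_lt_top.ne) hC hg hgM

end ClmApply

section Semigroup

variable {E : Type*} [NormedAddCommGroup E] [NormedSpace ℝ E] [CompleteSpace E]
  (X : E →L[ℝ] E) {g : ℝ → E}

theorem continuous_exp_smul : Continuous fun t : ℝ => NormedSpace.exp (t • X) :=
  (differentiable_exp_smul_const ℝ X).continuous

theorem exp_sub_smul_apply (t r : ℝ) (v : E) :
    NormedSpace.exp ((t - r) • X) v = NormedSpace.exp (t • X) (NormedSpace.exp ((-r) • X) v) := by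
  have hball (Y : E →L[ℝ] E) : Y ∈ Metric.eball 0 (NormedSpace.expSeries ℝ (E →L[ℝ] E)).radius := by
    simp [NormedSpace.expSeries_radius_eq_top]
  rw [sub_eq_add_neg, add_smul, NormedSpace.exp_add_of_commute_of_mem_ball
    (((Commute.refl X).smul_left t).smul_right (-r)) (hball _) (hball _)]
  rfl

theorem continuousOn_Iic_setIntegral_exp_smul {b : ℝ}
    (hg : IntegrableOn (fun r => NormedSpace.exp ((-r) • X) (g r)) (Iic b)) :
    ContinuousOn (fun t => ∫ r in Iic t, NormedSpace.exp ((t - r) • X) (g r)) (Iic b) := by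
  refine ((continuous_exp_smul X).continuousOn.clm_apply
    (continuousOn_Iic_setIntegral_Iic hg)).congr fun t (ht : t ≤ b) => ?_
  simp only [exp_sub_smul_apply]
  exact ContinuousLinearMap.integral_comp_comm _ (hg.mono_set (Iic_subset_Iic.2 ht))

theorem continuousOn_Iic_intervalIntegral_exp_smul {b : ℝ}
    (hg : ∀ a ≤ b, IntegrableOn (fun r => NormedSpace.exp ((-r) • X) (g r)) (Icc a b)) :
    ContinuousOn (fun t => ∫ r in t..b, NormedSpace.exp ((t - r) • X) (g r)) (Iic b) := by
  refine ((continuous_exp_smul X).continuousOn.clm_apply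
    (continuousOn_Iic_intervalIntegral hg)).congr fun t (ht : t ≤ b) => ?_
  simp only [exp_sub_smul_apply]
  exact ContinuousLinearMap.intervalIntegral_comp_comm _
    ((intervalIntegrable_iff_integrableOn_Icc_of_le ht).2 (hg t ht))

variable {X} {γ M : ℝ}

theorem integrableOn_Iic_exp_neg_smul_apply (hγ : 0 < γ)
    (hX : ∀ s, 0 ≤ s → ‖NormedSpace.exp (s • X)‖ ≤ Real.exp (-γ * s))
    (hg : AEStronglyMeasurable g (volume.restrict (Iic 0))) (hgM : ∀ r, ‖g r‖ ≤ M) :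
    IntegrableOn (fun r => NormedSpace.exp ((-r) • X) (g r)) (Iic 0) :=
  integrableOn_clm_apply_of_norm_le measurableSet_Iic
    ((continuous_exp_smul X).comp continuous_neg) (integrableOn_exp_mul_Iic hγ 0)
    (fun r (hr : r ≤ 0) => by simpa using hX (-r) (neg_nonneg.2 hr)) hg hgM

end Semigroup

theorem integral_exp_mul_le_inv {γ : ℝ} (hγ : 0 < γ) (t : ℝ) :
    ∫ r in t..0, Real.exp (γ * r) ≤ γ⁻¹ := by
  rw [intervalIntegral.integral_comp_mul_left (fun x => Real.exp x) hγ.ne', integral_exp,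
    mul_zero, Real.exp_zero, smul_eq_mul]
  exact mul_le_of_le_one_right (inv_nonneg.2 hγ.le) (sub_le_self _ (Real.exp_pos _).le)

section Bounds

variable {E : Type*} [NormedAddCommGroup E] [NormedSpace ℝ E]
  {X : E →L[ℝ] E} {g : ℝ → E} {γ κ M : ℝ}

theorem norm_apply_le_exp_mul_exp_mul {K : E →L[ℝ] E} {v : E} {t r : ℝ}
    (hK : ‖K‖ ≤ Real.exp (-γ * (t - r))) (hv : ‖v‖ ≤ M) :
    ‖K v‖ ≤ Real.exp (γ * r) * (Real.exp (-γ * t) * M) := by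
  rw [← mul_assoc, ← Real.exp_add, show γ * r + -γ * t = -γ * (t - r) by ring]
  exact K.le_of_opNorm_le_of_le hK hv

theorem norm_setIntegral_Iic_exp_smul_le (hγ : 0 < γ)
    (hX : ∀ s, 0 ≤ s → ‖NormedSpace.exp (s • X)‖ ≤ Real.exp (-γ * s))
    (hgM : ∀ r, ‖g r‖ ≤ M) (t : ℝ) :
    ‖∫ r in Iic t, NormedSpace.exp ((t - r) • X) (g r)‖ ≤ M / γ := by
  have hbound : ∀ r ∈ Iic t,
      ‖NormedSpace.exp ((t - r) • X) (g r)‖ ≤ Real.exp (γ * r) * (Real.exp (-γ * t) * M) :=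
    fun r (hr : r ≤ t) => norm_apply_le_exp_mul_exp_mul (hX _ (sub_nonneg.2 hr)) (hgM r)
  calc ‖∫ r in Iic t, NormedSpace.exp ((t - r) • X) (g r)‖
      ≤ ∫ r in Iic t, Real.exp (γ * r) * (Real.exp (-γ * t) * M) :=
        norm_integral_le_of_norm_le ((integrableOn_exp_mul_Iic hγ t).mul_const _)
          (ae_restrict_of_forall_mem measurableSet_Iic hbound)
    _ = M / γ := by
        rw [integral_mul_const, integral_exp_mul_Iic hγ, div_mul_eq_mul_div, ← mul_assoc,
          ← Real.exp_add, neg_mul, add_neg_cancel, Real.exp_zero, one_mul]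

theorem exp_mul_norm_setIntegral_Iic_exp_smul_le (hγ : 0 < γ) (hκ : 0 ≤ κ)
    (hX : ∀ s, 0 ≤ s → ‖NormedSpace.exp (s • X)‖ ≤ Real.exp (-γ * s))
    (hgM : ∀ r, ‖g r‖ ≤ M) {t : ℝ} (ht : t ≤ 0) :
    Real.exp (κ * t) * ‖∫ r in Iic t, NormedSpace.exp ((t - r) • X) (g r)‖ ≤ M / γ :=
  (mul_le_of_le_one_left (norm_nonneg _)
    (Real.exp_le_one_iff.2 (mul_nonpos_of_nonneg_of_nonpos hκ ht))).trans
    (norm_setIntegral_Iic_exp_smul_le hγ hX hgM t)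

theorem norm_exp_smul_sub_intervalIntegral_le (hγ : 0 < γ)
    (hX : ∀ s ≤ 0, ‖NormedSpace.exp (s • X)‖ ≤ Real.exp (-γ * s))
    (hgM : ∀ r, ‖g r‖ ≤ M) (v : E) {t : ℝ} (ht : t ≤ 0) :
    ‖NormedSpace.exp (t • X) v - ∫ r in t..0, NormedSpace.exp ((t - r) • X) (g r)‖
      ≤ Real.exp (-γ * t) * (‖v‖ + M / γ) := by
  have hM : 0 ≤ M := (norm_nonneg _).trans (hgM 0)
  have hbound : ∀ r ∈ Ioc t 0,
      ‖NormedSpace.exp ((t - r) • X) (g r)‖ ≤ Real.exp (γ * r) * (Real.exp (-γ * t) * M) :=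
    fun r hr => norm_apply_le_exp_mul_exp_mul (hX _ (by linarith [hr.1])) (hgM r)
  have hintegral : ‖∫ r in t..0, NormedSpace.exp ((t - r) • X) (g r)‖
      ≤ Real.exp (-γ * t) * (M / γ) :=
    calc _ ≤ ∫ r in t..0, Real.exp (γ * r) * (Real.exp (-γ * t) * M) :=
          intervalIntegral.norm_integral_le_of_norm_le ht (ae_of_all _ hbound)
            (Continuous.intervalIntegrable (by fun_prop) _ _)
      _ ≤ γ⁻¹ * (Real.exp (-γ * t) * M) := by
          rw [intervalIntegral.integral_mul_const]
          gcongr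
          exact integral_exp_mul_le_inv hγ t
      _ = _ := by ring
  calc _ ≤ ‖NormedSpace.exp (t • X) v‖ + ‖∫ r in t..0, NormedSpace.exp ((t - r) • X) (g r)‖ :=
        norm_sub_le _ _
    _ ≤ Real.exp (-γ * t) * ‖v‖ + Real.exp (-γ * t) * (M / γ) :=
        add_le_add (ContinuousLinearMap.le_of_opNorm_le_of_le _ (hX t ht) le_rfl) hintegral
    _ = _ := by ring

theorem exp_mul_norm_exp_smul_sub_intervalIntegral_le (hγ : 0 < γ) (hγκ : γ ≤ κ)
    (hX : ∀ s ≤ 0, ‖NormedSpace.exp (s • X)‖ ≤ Real.exp (-γ * s))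
    (hgM : ∀ r, ‖g r‖ ≤ M) (v : E) {t : ℝ} (ht : t ≤ 0) :
    Real.exp (κ * t) *
        ‖NormedSpace.exp (t • X) v - ∫ r in t..0, NormedSpace.exp ((t - r) • X) (g r)‖
      ≤ ‖v‖ + M / γ := by
  have hweight : Real.exp (κ * t) * Real.exp (-γ * t) ≤ 1 := by
    rw [← Real.exp_add, Real.exp_le_one_iff]
    nlinarith
  calc _ ≤ Real.exp (κ * t) * (Real.exp (-γ * t) * (‖v‖ + M / γ)) :=
        mul_le_mul_of_nonneg_left (norm_exp_smul_sub_intervalIntegral_le hγ hX hgM v ht)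
          (Real.exp_pos _).le
    _ ≤ ‖v‖ + M / γ := by
        rw [← mul_assoc]
        exact mul_le_of_le_one_left
          (add_nonneg (norm_nonneg _) (div_nonneg ((norm_nonneg _).trans (hgM 0)) hγ.le)) hweight

end Bounds

theorem star_operator_maps_into_weighted_space_general (n m : ℕ)
    (γ₁ γ₂ L MU MV μ ε : ℝ)
    (A : EuclideanSpace ℝ (Fin n) →L[ℝ] EuclideanSpace ℝ (Fin n))
    (B : EuclideanSpace ℝ (Fin m) →L[ℝ] EuclideanSpace ℝ (Fin m))
    (U : EuclideanSpace ℝ (Fin n) × EuclideanSpace ℝ (Fin m) → EuclideanSpace ℝ (Fin n))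
    (V : EuclideanSpace ℝ (Fin n) × EuclideanSpace ℝ (Fin m) → EuclideanSpace ℝ (Fin m))
    -- (H1)
    (hγ₁ : 0 < γ₁)
    (hA : ∀ x : EuclideanSpace ℝ (Fin n), ⟪A x, x⟫ ≤ -γ₁ * ‖x‖ ^ 2)
    -- (H2)
    (hγ₂ : 0 < γ₂)
    (hB₁ : ∀ t : ℝ, t ≤ 0 → ‖NormedSpace.exp (t • B)‖ ≤ Real.exp (-γ₂ * t))
    -- (H5)
    (hU : Measurable U) (hV : Measurable V)
    (hMU : ∀ z, ‖U z‖ ≤ MU) (hMV : ∀ z, ‖V z‖ ≤ MV)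
    -- scales
    (hε : 0 < ε) (hεμ : ε * γ₂ < μ)
    -- input paths
    (a : ℝ → EuclideanSpace ℝ (Fin n)) (b : ℝ → EuclideanSpace ℝ (Fin m))
    (ha : Measurable a) (hb : Measurable b)
    -- anchor and an element (û, v̂) of C⁻_{μ/ε}(ℝⁿ × ℝᵐ)
    (v₀ : EuclideanSpace ℝ (Fin m))
    (uh : ℝ → EuclideanSpace ℝ (Fin n)) (vh : ℝ → EuclideanSpace ℝ (Fin m))
    (huc : ContinuousOn uh (Set.Iic 0)) (hvc : ContinuousOn vh (Set.Iic 0)) :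
    (∀ t : ℝ, t ≤ 0 →
      Real.exp (μ / ε * t) *
        ‖∫ r in Set.Iic t,
            NormedSpace.exp (((t - r) / ε) • A) (ε⁻¹ • U (uh r + a r, vh r + b r))‖
        ≤ MU / γ₁) ∧
    (∀ t : ℝ, t ≤ 0 →
      Real.exp (μ / ε * t) *
        ‖NormedSpace.exp (t • B) v₀ -
            ∫ r in t..0, NormedSpace.exp ((t - r) • B) (V (uh r + a r, vh r + b r))‖
        ≤ ‖v₀‖ + MV / γ₂) ∧
    ContinuousOn (fun t : ℝ => ∫ r in Set.Iic t,
        NormedSpace.exp (((t - r) / ε) • A) (ε⁻¹ • U (uh r + a r, vh r + b r)))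
      (Set.Iic 0) ∧
    ContinuousOn (fun t : ℝ => NormedSpace.exp (t • B) v₀ -
        ∫ r in t..0, NormedSpace.exp ((t - r) • B) (V (uh r + a r, vh r + b r)))
      (Set.Iic 0) := by
  have hγ₁ε : 0 < γ₁ / ε := div_pos hγ₁ hε
  have hκ : γ₂ ≤ μ / ε := (le_div_iff₀ hε).2 (by linarith)
  have hdecay : ∀ s, 0 ≤ s → ‖NormedSpace.exp (s • ε⁻¹ • A)‖ ≤ Real.exp (-(γ₁ / ε) * s) := by
    refine fun s => norm_exp_smul_le_of_inner_le fun x => ?_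
    calc ⟪(ε⁻¹ • A) x, x⟫ = ε⁻¹ * ⟪A x, x⟫ := real_inner_smul_left _ _ _
      _ ≤ ε⁻¹ * (-γ₁ * ‖x‖ ^ 2) := by gcongr; exact hA x
      _ = -(γ₁ / ε) * ‖x‖ ^ 2 := by ring
  have hscale : ∀ t r : ℝ, ((t - r) / ε) • A = (t - r) • ε⁻¹ • A := fun t r => by
    rw [div_eq_mul_inv, mul_smul]
  have hUε : ∀ r, ‖ε⁻¹ • U (uh r + a r, vh r + b r)‖ ≤ ε⁻¹ * MU := fun r => by
    rw [norm_smul, norm_inv, Real.norm_of_nonneg hε.le]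
    exact mul_le_mul_of_nonneg_left (hMU _) (inv_nonneg.2 hε.le)
  have hw : AEMeasurable (fun r => (uh r + a r, vh r + b r)) (volume.restrict (Iic 0)) :=
    ((huc.aemeasurable measurableSet_Iic).add ha.aemeasurable).prodMk
      ((hvc.aemeasurable measurableSet_Iic).add hb.aemeasurable)
  simp only [hscale]
  refine ⟨fun t ht => ?_,
    fun t ht => exp_mul_norm_exp_smul_sub_intervalIntegral_le hγ₂ hκ hB₁ (fun r => hMV _) v₀ ht,
    continuousOn_Iic_setIntegral_exp_smul _ (integrableOn_Iic_exp_neg_smul_apply hγ₁ε hdecay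
      ((hU.comp_aemeasurable hw).const_smul ε⁻¹).aestronglyMeasurable hUε),
    ((continuous_exp_smul B).clm_apply continuous_const).continuousOn.sub
      (continuousOn_Iic_intervalIntegral_exp_smul B fun c _ =>
        integrableOn_clm_apply_of_isCompact isCompact_Icc
          ((continuous_exp_smul B).comp continuous_neg)
          ((hV.comp_aemeasurable hw).aestronglyMeasurable.mono_set Icc_subset_Iic_self)
          fun r => hMV _)⟩
  calc _ ≤ ε⁻¹ * MU / (γ₁ / ε) :=
        exp_mul_norm_setIntegral_Iic_exp_smul_le hγ₁ε (hγ₂.le.trans hκ) hdecay hUε ht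
    _ = MU / γ₁ := by field_simp

/-- Under (H1), (H2), (H5), with `ε γ₂ < μ < γ₁`, the operator
`I = (I₁, I₂)` defined by the integral system (★) satisfies
`sup_{t ≤ 0} e^{(μ/ε) t} ‖I₁(û,v̂)(t)‖ ≤ M_U / γ₁` and
`sup_{t ≤ 0} e^{(μ/ε) t} ‖I₂(û,v̂)(t)‖ ≤ ‖v̄₀‖ + M_V / γ₂`;
in particular it maps `C⁻_{μ/ε}(ℝⁿ × ℝᵐ)` into itself. -/
theorem star_operator_maps_into_weighted_space (n m : ℕ)
    (γ₁ γ₂ γ₃ L MU MV μ ε : ℝ)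
    (A : EuclideanSpace ℝ (Fin n) →L[ℝ] EuclideanSpace ℝ (Fin n))
    (B : EuclideanSpace ℝ (Fin m) →L[ℝ] EuclideanSpace ℝ (Fin m))
    (U : EuclideanSpace ℝ (Fin n) × EuclideanSpace ℝ (Fin m) → EuclideanSpace ℝ (Fin n))
    (V : EuclideanSpace ℝ (Fin n) × EuclideanSpace ℝ (Fin m) → EuclideanSpace ℝ (Fin m))
    -- (H1)
    (hγ₁ : 0 < γ₁)
    (hA : ∀ x : EuclideanSpace ℝ (Fin n), ⟪A x, x⟫ ≤ -γ₁ * ‖x‖ ^ 2)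
    -- (H2)
    (hγ₂ : 0 < γ₂) (hγ₃ : 0 < γ₃)
    (hB₁ : ∀ t : ℝ, t ≤ 0 → ‖NormedSpace.exp (t • B)‖ ≤ Real.exp (-γ₂ * t))
    (hB₂ : ∀ t : ℝ, 0 < t → ‖NormedSpace.exp (t • B)‖ ≤ Real.exp (-γ₃ * t))
    -- (H5)
    (hU : Measurable U) (hV : Measurable V)
    (hMU : ∀ z, ‖U z‖ ≤ MU) (hMV : ∀ z, ‖V z‖ ≤ MV)
    -- scales
    (hμ : 0 < μ) (hε : 0 < ε) (hεμ : ε * γ₂ < μ) (hμγ₁ : μ < γ₁)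
    -- input paths
    (a : ℝ → EuclideanSpace ℝ (Fin n)) (b : ℝ → EuclideanSpace ℝ (Fin m))
    (ha : Measurable a) (hb : Measurable b)
    -- anchor and an element (û, v̂) of C⁻_{μ/ε}(ℝⁿ × ℝᵐ)
    (v₀ : EuclideanSpace ℝ (Fin m))
    (uh : ℝ → EuclideanSpace ℝ (Fin n)) (vh : ℝ → EuclideanSpace ℝ (Fin m))
    (huc : ContinuousOn uh (Set.Iic 0)) (hvc : ContinuousOn vh (Set.Iic 0))
    (hbound : ∃ K : ℝ, ∀ t : ℝ, t ≤ 0 → Real.exp (μ / ε * t) * (‖uh t‖ + ‖vh t‖) ≤ K) :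
    (∀ t : ℝ, t ≤ 0 →
      Real.exp (μ / ε * t) *
        ‖∫ r in Set.Iic t,
            NormedSpace.exp (((t - r) / ε) • A) (ε⁻¹ • U (uh r + a r, vh r + b r))‖
        ≤ MU / γ₁) ∧
    (∀ t : ℝ, t ≤ 0 →
      Real.exp (μ / ε * t) *
        ‖NormedSpace.exp (t • B) v₀ -
            ∫ r in t..0, NormedSpace.exp ((t - r) • B) (V (uh r + a r, vh r + b r))‖
        ≤ ‖v₀‖ + MV / γ₂) ∧
    ContinuousOn (fun t : ℝ => ∫ r in Set.Iic t,
        NormedSpace.exp (((t - r) / ε) • A) (ε⁻¹ • U (uh r + a r, vh r + b r)))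
      (Set.Iic 0) ∧
    ContinuousOn (fun t : ℝ => NormedSpace.exp (t • B) v₀ -
        ∫ r in t..0, NormedSpace.exp ((t - r) • B) (V (uh r + a r, vh r + b r)))
      (Set.Iic 0) :=
  star_operator_maps_into_weighted_space_general n m γ₁ γ₂ L MU MV μ ε A B U V hγ₁ hA hγ₂ hB₁ hU hV
    hMU hMV hε hεμ a b ha hb v₀ uh vh huc hvc
end

section
/- Assume (H1), (H2), (H5), let μ > 0 with εγ₂ < μ < γ₁, let a, b be Borel measurable, and let (ū, v̄) : [0,∞) → ℝⁿ×ℝᵐ be any continuous function with (ū₀, v̄₀) its value at 0 and sup_{t≥0}(|ū_t| + |v̄_t|) arbitrary. Define the extension z̄_t := ((I − |t|A)^{−1}ū₀, v̄₀) for t ≤ 0 and z̄_t := (ū_t, v̄_t) for t > 0, and define Z̄₀(t) := −z̄_t + I(z̄)(t) for t ≤ 0 and Z̄₀(t) := (e^{(A/ε)t}(I₁(z̄)(0) − ū₀), 0) for t > 0, where I = (I₁, I₂) with anchor v̄₀ is I₁(z̄)(t) = ∫_{−∞}^t e^{(A/ε)(t−r)} ε^{−1} U(z̄¹_r + a(r),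 z̄²_r + b(r)) dr, I₂(z̄)(t) = e^{Bt}v̄₀ − ∫_t^0 e^{B(t−r)} V(z̄¹_r + a(r), z̄²_r + b(r)) dr. Then sup_{t∈ℝ} e^{(μ/ε)t}|Z̄₀(t)| ≤ 2(|ū₀| + |v̄₀|) + 2M_U/γ₁ + M_V/γ₂. -/
/-!
On `t ≤ 0` the weight `e^{μt/ε}` is at most `1`, and since `μ/ε > γ₂` it also absorbs the growth
`e^{-γ₂t}` of the backward flow of `B`; on `t > 0` it is absorbed by the decay `e^{-γ₁t/ε}` of
`e^{tA/ε}`, since `μ < γ₁`. That decay and the contractivity of the resolvents `(I - |t|A)⁻¹` both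
come from the dissipativity `⟪Ax, x⟫ ≤ -γ₁|x|²`. The integral terms are bounded by integrating
their exponential majorants, e.g. `∫_{-∞}^t e^{-γ₁(t-r)/ε} ε⁻¹ M_U dr = M_U/γ₁`.
-/

open scoped RealInnerProductSpace
open MeasureTheory Set

theorem norm_setIntegral_le_of_norm_le_exp {E : Type*} [NormedAddCommGroup E] [NormedSpace ℝ E]
    {f : ℝ → E} {s : Set ℝ} {T C c : ℝ} (hs : MeasurableSet s) (hsT : s ⊆ Iic T)
    (hC : 0 ≤ C) (hc : 0 < c) (hf : ∀ r ∈ s, ‖f r‖ ≤ C * Real.exp (c * (r - T))) :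
    ‖∫ r in s, f r‖ ≤ C / c := by
  have hg : IntegrableOn (fun r => C * Real.exp (c * (r - T))) (Iic T) := by
    simp_rw [mul_sub, Real.exp_sub]
    exact ((integrableOn_exp_mul_Iic hc T).div_const _).const_mul C
  calc ‖∫ r in s, f r‖ ≤ ∫ r in s, C * Real.exp (c * (r - T)) :=
        norm_integral_le_of_norm_le (hg.mono_set hsT) (ae_restrict_of_forall_mem hs hf)
    _ ≤ ∫ r in Iic T, C * Real.exp (c * (r - T)) :=
        setIntegral_mono_set hg (.of_forall fun r => by positivity) hsT.eventuallyLE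
    _ = C / c := by
        simp_rw [mul_sub, Real.exp_sub]
        rw [integral_const_mul, integral_div, integral_exp_mul_Iic hc]
        field_simp

section Dissipative

variable {E : Type*} [NormedAddCommGroup E] [InnerProductSpace ℝ E]

theorem norm_le_norm_sub_smul_apply {A : E →L[ℝ] E} (hA : ∀ x, ⟪A x, x⟫ ≤ 0) {s : ℝ}
    (hs : 0 ≤ s) (x : E) : ‖x‖ ≤ ‖x - s • A x‖ := by
  have h : ‖x‖ ^ 2 ≤ ‖x - s • A x‖ * ‖x‖ :=
    calc ‖x‖ ^ 2 ≤ ⟪x - s • A x, x⟫ := by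
          rw [inner_sub_left, real_inner_smul_left, real_inner_self_eq_norm_sq]
          nlinarith [mul_nonpos_of_nonneg_of_nonpos hs (hA x)]
      _ ≤ ‖x - s • A x‖ * ‖x‖ := real_inner_le_norm _ _
  rcases (norm_nonneg x).eq_or_lt with hx | hx
  · exact hx ▸ norm_nonneg _
  · exact le_of_mul_le_mul_right (by rwa [sq] at h) hx

theorem norm_apply_le_of_one_sub_smul_comp_eq_one {A R : E →L[ℝ] E} (hA : ∀ x, ⟪A x, x⟫ ≤ 0)
    {s : ℝ} (hs : 0 ≤ s) (hR : (1 - s • A) ∘L R = 1) (y : E) : ‖R y‖ ≤ ‖y‖ := by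
  have hy : R y - s • A (R y) = y := by
    simpa using congrArg (fun L : E →L[ℝ] E => L y) hR
  simpa [hy] using norm_le_norm_sub_smul_apply hA hs (R y)

variable [CompleteSpace E]

/-- The Lyapunov function `u ↦ e^{2γu} ‖e^{uA} x‖²` is nonincreasing. -/
theorem norm_exp_smul_apply_le {A : E →L[ℝ] E} {γ : ℝ} (hA : ∀ x, ⟪A x, x⟫ ≤ -γ * ‖x‖ ^ 2)
    {s : ℝ} (hs : 0 ≤ s) (x : E) :
    ‖NormedSpace.exp (s • A) x‖ ≤ Real.exp (-γ * s) * ‖x‖ := by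
  set g : ℝ → E := fun u => NormedSpace.exp (u • A) x
  have hg (u : ℝ) : HasDerivAt g (A (g u)) u := by
    simpa using (hasDerivAt_exp_smul_const' (𝕂 := ℝ) A u).clm_apply (hasDerivAt_const u x)
  set φ : ℝ → ℝ := fun u => Real.exp (2 * γ * u) * ‖g u‖ ^ 2
  have hφ (u : ℝ) : HasDerivAt φ (2 * γ * Real.exp (2 * γ * u) * ‖g u‖ ^ 2 +
      Real.exp (2 * γ * u) * (2 * ⟪g u, A (g u)⟫)) u := by
    have := HasDerivAt.mul ((hasDerivAt_id' u).const_mul (2 * γ)).exp (hg u).norm_sq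
    exact this.congr_deriv (by ring)
  have hφ_anti : Antitone φ := by
    refine antitone_of_deriv_nonpos (fun u => (hφ u).differentiableAt) fun u => ?_
    rw [(hφ u).deriv, real_inner_comm]
    nlinarith [hA (g u), Real.exp_pos (2 * γ * u)]
  have hsq : ‖g s‖ ^ 2 ≤ (Real.exp (-γ * s) * ‖x‖) ^ 2 := by
    have h : φ s ≤ φ 0 := hφ_anti hs
    simp only [φ, g, mul_zero, zero_smul, NormedSpace.exp_zero, Real.exp_zero, one_mul,
      one_apply_eq_self] at h
    calc ‖g s‖ ^ 2 = Real.exp (-(2 * γ * s)) * (Real.exp (2 * γ * s) * ‖g s‖ ^ 2) := by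
          rw [← mul_assoc, ← Real.exp_add, neg_add_cancel, Real.exp_zero, one_mul]
      _ ≤ Real.exp (-(2 * γ * s)) * ‖x‖ ^ 2 := mul_le_mul_of_nonneg_left h (Real.exp_pos _).le
      _ = (Real.exp (-γ * s) * ‖x‖) ^ 2 := by
          rw [mul_pow, ← Real.exp_nat_mul]
          ring_nf
  exact (pow_le_pow_iff_left₀ (norm_nonneg _) (by positivity) two_ne_zero).1 hsq

end Dissipative

theorem norm_integral_Iic_exp_smul_apply_le {E : Type*} [NormedAddCommGroup E]
    [InnerProductSpace ℝ E] [CompleteSpace E] {A : E →L[ℝ] E} {γ ε M : ℝ} (hγ : 0 < γ)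
    (hA : ∀ x, ⟪A x, x⟫ ≤ -γ * ‖x‖ ^ 2) (hε : 0 < ε) {f : ℝ → E} (hf : ∀ r, ‖f r‖ ≤ M)
    (t : ℝ) :
    ‖∫ r in Iic t, NormedSpace.exp (((t - r) / ε) • A) (ε⁻¹ • f r)‖ ≤ M / γ := by
  have hM : 0 ≤ M := (norm_nonneg _).trans (hf 0)
  have hbound (r : ℝ) (hr : r ∈ Iic t) : ‖NormedSpace.exp (((t - r) / ε) • A) (ε⁻¹ • f r)‖ ≤
      ε⁻¹ * M * Real.exp (γ / ε * (r - t)) :=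
    calc ‖NormedSpace.exp (((t - r) / ε) • A) (ε⁻¹ • f r)‖
        ≤ Real.exp (-γ * ((t - r) / ε)) * ‖ε⁻¹ • f r‖ :=
          norm_exp_smul_apply_le hA (div_nonneg (sub_nonneg.2 hr) hε.le) _
      _ ≤ Real.exp (-γ * ((t - r) / ε)) * (ε⁻¹ * M) := by
          rw [norm_smul, Real.norm_of_nonneg (inv_nonneg.2 hε.le)]
          gcongr
          exact hf r
      _ = ε⁻¹ * M * Real.exp (γ / ε * (r - t)) := by
          rw [mul_comm]
          congr 2
          ring
  calc _ ≤ ε⁻¹ * M / (γ / ε) := norm_setIntegral_le_of_norm_le_exp measurableSet_Iic subset_rfl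
        (by positivity) (div_pos hγ hε) hbound
    _ = M / γ := by field_simp

theorem norm_exp_smul_apply_sub_intervalIntegral_le {E : Type*} [NormedAddCommGroup E]
    [NormedSpace ℝ E] {B : E →L[ℝ] E} {γ M : ℝ} (hγ : 0 < γ)
    (hB : ∀ t ≤ 0, ‖NormedSpace.exp (t • B)‖ ≤ Real.exp (-γ * t)) {g : ℝ → E}
    (hg : ∀ r, ‖g r‖ ≤ M) (v : E) {t : ℝ} (ht : t ≤ 0) :
    ‖NormedSpace.exp (t • B) v - ∫ r in t..0, NormedSpace.exp ((t - r) • B) (g r)‖ ≤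
      Real.exp (-γ * t) * (‖v‖ + M / γ) := by
  have hM : 0 ≤ M := (norm_nonneg _).trans (hg 0)
  have hv : ‖NormedSpace.exp (t • B) v‖ ≤ Real.exp (-γ * t) * ‖v‖ :=
    (ContinuousLinearMap.le_opNorm _ _).trans (by gcongr; exact hB t ht)
  have hI : ‖∫ r in t..0, NormedSpace.exp ((t - r) • B) (g r)‖ ≤ M * Real.exp (-γ * t) / γ := by
    rw [intervalIntegral.integral_of_le ht]
    refine norm_setIntegral_le_of_norm_le_exp measurableSet_Ioc (fun r hr => hr.2)
      (by positivity) hγ fun r hr => ?_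
    calc ‖NormedSpace.exp ((t - r) • B) (g r)‖ ≤ Real.exp (-γ * (t - r)) * M :=
          (ContinuousLinearMap.le_opNorm _ _).trans
            (mul_le_mul (hB _ (by linarith [hr.1])) (hg r) (norm_nonneg _) (by positivity))
      _ = M * Real.exp (-γ * t) * Real.exp (γ * (r - 0)) := by
          rw [mul_assoc, ← Real.exp_add]
          ring_nf
  calc _ ≤ ‖NormedSpace.exp (t • B) v‖ + ‖∫ r in t..0, NormedSpace.exp ((t - r) • B) (g r)‖ :=
        norm_sub_le _ _
    _ ≤ Real.exp (-γ * t) * ‖v‖ + M * Real.exp (-γ * t) / γ := add_le_add hv hI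
    _ = Real.exp (-γ * t) * (‖v‖ + M / γ) := by ring

theorem exp_mul_mul_le_of_le_add_exp_mul {κ γ t x X Y : ℝ} (ht : t ≤ 0) (hγκ : γ ≤ κ)
    (hγ : 0 ≤ γ) (hX : 0 ≤ X) (hY : 0 ≤ Y) (hx : x ≤ X + Real.exp (-γ * t) * Y) :
    Real.exp (κ * t) * x ≤ X + Y := by
  have hw : Real.exp (κ * t) ≤ 1 := Real.exp_le_one_iff.2 (by nlinarith)
  have hwγ : Real.exp (κ * t) * Real.exp (-γ * t) ≤ 1 := by
    rw [← Real.exp_add, Real.exp_le_one_iff]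
    nlinarith
  calc Real.exp (κ * t) * x
      ≤ Real.exp (κ * t) * X + Real.exp (κ * t) * Real.exp (-γ * t) * Y := by
        rw [mul_assoc, ← mul_add]
        exact mul_le_mul_of_nonneg_left hx (Real.exp_pos _).le
    _ ≤ X + Y := add_le_add (mul_le_of_le_one_left hX hw) (mul_le_of_le_one_left hY hwγ)

theorem exp_mul_mul_le_of_le_exp_mul {κ γ t x Y : ℝ} (ht : 0 ≤ t) (hκγ : κ ≤ γ) (hY : 0 ≤ Y)
    (hx : x ≤ Real.exp (-γ * t) * Y) : Real.exp (κ * t) * x ≤ Y := by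
  have hw : Real.exp (κ * t) * Real.exp (-γ * t) ≤ 1 := by
    rw [← Real.exp_add, Real.exp_le_one_iff]
    nlinarith
  calc Real.exp (κ * t) * x ≤ Real.exp (κ * t) * Real.exp (-γ * t) * Y := by
        rw [mul_assoc]
        exact mul_le_mul_of_nonneg_left hx (Real.exp_pos _).le
    _ ≤ Y := mul_le_of_le_one_left hY hw

theorem Z0_weighted_bound_general (n m : ℕ)
    (γ₁ γ₂ MU MV μ ε : ℝ)
    (A : EuclideanSpace ℝ (Fin n) →L[ℝ] EuclideanSpace ℝ (Fin n))
    (B : EuclideanSpace ℝ (Fin m) →L[ℝ] EuclideanSpace ℝ (Fin m))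
    (U : EuclideanSpace ℝ (Fin n) × EuclideanSpace ℝ (Fin m) → EuclideanSpace ℝ (Fin n))
    (V : EuclideanSpace ℝ (Fin n) × EuclideanSpace ℝ (Fin m) → EuclideanSpace ℝ (Fin m))
    -- (H1)
    (hγ₁ : 0 < γ₁)
    (hA : ∀ x : EuclideanSpace ℝ (Fin n), ⟪A x, x⟫ ≤ -γ₁ * ‖x‖ ^ 2)
    -- (H2)
    (hγ₂ : 0 < γ₂)
    (hB₁ : ∀ t : ℝ, t ≤ 0 → ‖NormedSpace.exp (t • B)‖ ≤ Real.exp (-γ₂ * t))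
    -- (H5)
    (hMU : ∀ z, ‖U z‖ ≤ MU) (hMV : ∀ z, ‖V z‖ ≤ MV)
    -- scales
    (hε : 0 < ε) (hεμ : ε * γ₂ < μ) (hμγ₁ : μ < γ₁)
    -- input paths
    (a : ℝ → EuclideanSpace ℝ (Fin n)) (b : ℝ → EuclideanSpace ℝ (Fin m))
    -- an arbitrary continuous path (ū, v̄) on [0, ∞)
    (ub : ℝ → EuclideanSpace ℝ (Fin n)) (vb : ℝ → EuclideanSpace ℝ (Fin m))
    -- the resolvents (I - |t| A)⁻¹ for t ≤ 0
    (R : ℝ → (EuclideanSpace ℝ (Fin n) →L[ℝ] EuclideanSpace ℝ (Fin n)))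
    (hR : ∀ t : ℝ, t ≤ 0 → (1 - |t| • A) ∘L R t = 1 ∧ R t ∘L (1 - |t| • A) = 1)
    -- the backward extension z̄ = (z₁, z₂)
    (z₁ : ℝ → EuclideanSpace ℝ (Fin n)) (z₂ : ℝ → EuclideanSpace ℝ (Fin m))
    (hz₁neg : ∀ t : ℝ, t ≤ 0 → z₁ t = R t (ub 0))
    (hz₂neg : ∀ t : ℝ, t ≤ 0 → z₂ t = vb 0)
    -- the function Z̄₀ = (Z₁, Z₂)
    (Z₁ : ℝ → EuclideanSpace ℝ (Fin n)) (Z₂ : ℝ → EuclideanSpace ℝ (Fin m))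
    (hZ₁neg : ∀ t : ℝ, t ≤ 0 → Z₁ t = -(z₁ t) +
      ∫ r in Set.Iic t, NormedSpace.exp (((t - r) / ε) • A) (ε⁻¹ • U (z₁ r + a r, z₂ r + b r)))
    (hZ₁pos : ∀ t : ℝ, 0 < t → Z₁ t = NormedSpace.exp ((t / ε) • A)
      ((∫ r in Set.Iic (0:ℝ),
          NormedSpace.exp (((0 - r) / ε) • A) (ε⁻¹ • U (z₁ r + a r, z₂ r + b r))) - ub 0))
    (hZ₂neg : ∀ t : ℝ, t ≤ 0 → Z₂ t = -(z₂ t) +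
      (NormedSpace.exp (t • B) (vb 0) -
        ∫ r in t..0, NormedSpace.exp ((t - r) • B) (V (z₁ r + a r, z₂ r + b r))))
    (hZ₂pos : ∀ t : ℝ, 0 < t → Z₂ t = 0) :
    ∀ t : ℝ, Real.exp (μ / ε * t) * (‖Z₁ t‖ + ‖Z₂ t‖) ≤
      2 * (‖ub 0‖ + ‖vb 0‖) + 2 * MU / γ₁ + MV / γ₂ := by
  intro t
  have hI₁ (s : ℝ) := norm_integral_Iic_exp_smul_apply_le hγ₁ hA hε
    (fun r => hMU (z₁ r + a r, z₂ r + b r)) s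
  have hMU₀ : 0 ≤ MU / γ₁ := div_nonneg ((norm_nonneg _).trans (hMU 0)) hγ₁.le
  have hMV₀ : 0 ≤ MV / γ₂ := div_nonneg ((norm_nonneg _).trans (hMV 0)) hγ₂.le
  rcases le_or_gt t 0 with ht | ht
  · have hZ₁ : ‖Z₁ t‖ ≤ ‖ub 0‖ + MU / γ₁ := by
      rw [hZ₁neg t ht, hz₁neg t ht]
      refine (norm_add_le _ _).trans (add_le_add ?_ (hI₁ t))
      rw [norm_neg]
      exact norm_apply_le_of_one_sub_smul_comp_eq_one (fun x => (hA x).trans (by nlinarith))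
        (abs_nonneg t) (hR t ht).1 _
    have hZ₂ : ‖Z₂ t‖ ≤ ‖vb 0‖ + Real.exp (-γ₂ * t) * (‖vb 0‖ + MV / γ₂) := by
      rw [hZ₂neg t ht, hz₂neg t ht]
      exact (norm_add_le _ _).trans (add_le_add (norm_neg _).le
        (norm_exp_smul_apply_sub_intervalIntegral_le hγ₂ hB₁ (fun r => hMV _) _ ht))
    have hZ : ‖Z₁ t‖ + ‖Z₂ t‖ ≤
        ‖ub 0‖ + MU / γ₁ + ‖vb 0‖ + Real.exp (-γ₂ * t) * (‖vb 0‖ + MV / γ₂) := by linarith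
    have := exp_mul_mul_le_of_le_add_exp_mul (κ := μ / ε) ht
      ((le_div_iff₀ hε).2 (by linarith)) hγ₂.le (by positivity) (by positivity) hZ
    linarith [mul_div_assoc 2 MU γ₁, norm_nonneg (ub 0)]
  · have hZ₁ : ‖Z₁ t‖ ≤ Real.exp (-(γ₁ / ε) * t) * (MU / γ₁ + ‖ub 0‖) := by
      rw [hZ₁pos t ht, show -(γ₁ / ε) * t = -γ₁ * (t / ε) by ring]
      refine (norm_exp_smul_apply_le hA (div_nonneg ht.le hε.le) _).trans ?_
      gcongr
      exact (norm_sub_le _ _).trans (add_le_add_left (hI₁ 0) _)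
    have := exp_mul_mul_le_of_le_exp_mul ht.le (div_le_div_of_nonneg_right hμγ₁.le hε.le)
      (by positivity) hZ₁
    rw [hZ₂pos t ht, norm_zero, add_zero]
    linarith [mul_div_assoc 2 MU γ₁, norm_nonneg (ub 0), norm_nonneg (vb 0)]

/-- estimate (3.9). Under (H1), (H2), (H5) and `ε γ₂ < μ < γ₁`, for any
continuous `(ū, v̄)` on `[0, ∞)`, the function `Z̄₀` built from the backward extension
`z̄_t = ((I - |t|A)⁻¹ ū₀, v̄₀)` (`t ≤ 0`), `z̄_t = (ū_t, v̄_t)` (`t > 0`) via the operator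
`I = (I₁, I₂)` of (★) satisfies
`sup_{t∈ℝ} e^{(μ/ε)t} |Z̄₀(t)| ≤ 2(‖ū₀‖ + ‖v̄₀‖) + 2 M_U/γ₁ + M_V/γ₂`. -/
theorem Z0_weighted_bound (n m : ℕ)
    (γ₁ γ₂ γ₃ MU MV μ ε : ℝ)
    (A : EuclideanSpace ℝ (Fin n) →L[ℝ] EuclideanSpace ℝ (Fin n))
    (B : EuclideanSpace ℝ (Fin m) →L[ℝ] EuclideanSpace ℝ (Fin m))
    (U : EuclideanSpace ℝ (Fin n) × EuclideanSpace ℝ (Fin m) → EuclideanSpace ℝ (Fin n))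
    (V : EuclideanSpace ℝ (Fin n) × EuclideanSpace ℝ (Fin m) → EuclideanSpace ℝ (Fin m))
    -- (H1)
    (hγ₁ : 0 < γ₁)
    (hA : ∀ x : EuclideanSpace ℝ (Fin n), ⟪A x, x⟫ ≤ -γ₁ * ‖x‖ ^ 2)
    -- (H2)
    (hγ₂ : 0 < γ₂) (hγ₃ : 0 < γ₃)
    (hB₁ : ∀ t : ℝ, t ≤ 0 → ‖NormedSpace.exp (t • B)‖ ≤ Real.exp (-γ₂ * t))
    (hB₂ : ∀ t : ℝ, 0 < t → ‖NormedSpace.exp (t • B)‖ ≤ Real.exp (-γ₃ * t))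
    -- (H5)
    (hU : Measurable U) (hV : Measurable V)
    (hMU : ∀ z, ‖U z‖ ≤ MU) (hMV : ∀ z, ‖V z‖ ≤ MV)
    -- scales
    (hμ : 0 < μ) (hε : 0 < ε) (hεμ : ε * γ₂ < μ) (hμγ₁ : μ < γ₁)
    -- input paths
    (a : ℝ → EuclideanSpace ℝ (Fin n)) (b : ℝ → EuclideanSpace ℝ (Fin m))
    (ha : Measurable a) (hb : Measurable b)
    -- an arbitrary continuous path (ū, v̄) on [0, ∞)
    (ub : ℝ → EuclideanSpace ℝ (Fin n)) (vb : ℝ → EuclideanSpace ℝ (Fin m))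
    (hub : ContinuousOn ub (Set.Ici 0)) (hvb : ContinuousOn vb (Set.Ici 0))
    -- the resolvents (I - |t| A)⁻¹ for t ≤ 0
    (R : ℝ → (EuclideanSpace ℝ (Fin n) →L[ℝ] EuclideanSpace ℝ (Fin n)))
    (hR : ∀ t : ℝ, t ≤ 0 → (1 - |t| • A) ∘L R t = 1 ∧ R t ∘L (1 - |t| • A) = 1)
    -- the backward extension z̄ = (z₁, z₂)
    (z₁ : ℝ → EuclideanSpace ℝ (Fin n)) (z₂ : ℝ → EuclideanSpace ℝ (Fin m))
    (hz₁neg : ∀ t : ℝ, t ≤ 0 → z₁ t = R t (ub 0)) (hz₁pos : ∀ t : ℝ, 0 < t → z₁ t = ub t)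
    (hz₂neg : ∀ t : ℝ, t ≤ 0 → z₂ t = vb 0) (hz₂pos : ∀ t : ℝ, 0 < t → z₂ t = vb t)
    -- the function Z̄₀ = (Z₁, Z₂)
    (Z₁ : ℝ → EuclideanSpace ℝ (Fin n)) (Z₂ : ℝ → EuclideanSpace ℝ (Fin m))
    (hZ₁neg : ∀ t : ℝ, t ≤ 0 → Z₁ t = -(z₁ t) +
      ∫ r in Set.Iic t, NormedSpace.exp (((t - r) / ε) • A) (ε⁻¹ • U (z₁ r + a r, z₂ r + b r)))
    (hZ₁pos : ∀ t : ℝ, 0 < t → Z₁ t = NormedSpace.exp ((t / ε) • A)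
      ((∫ r in Set.Iic (0:ℝ),
          NormedSpace.exp (((0 - r) / ε) • A) (ε⁻¹ • U (z₁ r + a r, z₂ r + b r))) - ub 0))
    (hZ₂neg : ∀ t : ℝ, t ≤ 0 → Z₂ t = -(z₂ t) +
      (NormedSpace.exp (t • B) (vb 0) -
        ∫ r in t..0, NormedSpace.exp ((t - r) • B) (V (z₁ r + a r, z₂ r + b r))))
    (hZ₂pos : ∀ t : ℝ, 0 < t → Z₂ t = 0) :
    ∀ t : ℝ, Real.exp (μ / ε * t) * (‖Z₁ t‖ + ‖Z₂ t‖) ≤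
      2 * (‖ub 0‖ + ‖vb 0‖) + 2 * MU / γ₁ + MV / γ₂ :=
  Z0_weighted_bound_general n m γ₁ γ₂ MU MV μ ε A B U V hγ₁ hA hγ₂ hB₁ hMU hMV hε hεμ hμγ₁ a b ub vb
    R hR z₁ z₂ hz₁neg hz₂neg Z₁ Z₂ hZ₁neg hZ₁pos hZ₂neg hZ₂pos
end

section
/- Let B be a real m×m matrix with ‖e^{Bt}‖ ≤ e^{−γ₃t} for all t ≥ 0, where γ₃ > 0, let ε > 0, M_V ≥ 0, v₀ ∈ ℝᵐ, and let g : [0,∞) → ℝᵐ be Borel measurable with |g(s)| ≤ M_V for all s. If ṽ : [0,∞) → ℝᵐ satisfies ṽ_t = e^{εBt} v₀ + ε ∫₀ᵗ e^{εB(t−s)} g(s) ds for all t ≥ 0, then |ṽ_t − v₀| ≤ ((|Bv₀| + M_V)/γ₃) (1 − e^{−εγ₃ t}) for all t ≥ 0. -/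
/-!
Split `ṽ_t - v₀` into the free part `e^{εBt} v₀ - v₀ = ∫₀^{εt} e^{τB} B v₀ dτ` and the forcing
term. After the substitution `u = t - s` both are integrals over `[0, T]` of functions bounded by
`C e^{-c u}`, thanks to the decay `‖e^{τB}‖ ≤ e^{-γ₃ τ}`, and `∫₀ᵀ e^{-cu} du = (1 - e^{-cT})/c`.
-/

open MeasureTheory Set Real

theorem integral_exp_neg_mul {c : ℝ} (hc : c ≠ 0) (T : ℝ) :
    ∫ u in (0:ℝ)..T, exp (-(c * u)) = (1 - exp (-(c * T))) / c := by
  simp only [← neg_mul]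
  rw [intervalIntegral.integral_comp_mul_left (fun u => exp u) (neg_ne_zero.mpr hc),
    integral_exp, mul_zero, exp_zero, smul_eq_mul]
  field_simp
  ring

theorem norm_intervalIntegral_le_of_norm_le_exp_neg {E : Type*} [NormedAddCommGroup E]
    [NormedSpace ℝ E] {F : ℝ → E} {C c T : ℝ} (hc : c ≠ 0) (hT : 0 ≤ T)
    (hF : ∀ u ∈ Ioc 0 T, ‖F u‖ ≤ C * exp (-(c * u))) :
    ‖∫ u in (0:ℝ)..T, F u‖ ≤ C * ((1 - exp (-(c * T))) / c) := by
  have hbound := intervalIntegral.norm_integral_le_of_norm_le (μ := volume) hT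
    (Filter.Eventually.of_forall hF)
    ((by fun_prop : Continuous fun u => C * exp (-(c * u))).intervalIntegrable 0 T)
  rwa [intervalIntegral.integral_const_mul, integral_exp_neg_mul hc] at hbound

section
variable {E : Type*} [NormedAddCommGroup E] [NormedSpace ℝ E]

theorem hasDerivAt_exp_smul_apply [CompleteSpace E] (B : E →L[ℝ] E) (v : E) (τ : ℝ) :
    HasDerivAt (fun u : ℝ => NormedSpace.exp (u • B) v) (NormedSpace.exp (τ • B) (B v)) τ := by
  simpa using (hasDerivAt_exp_smul_const (𝕂 := ℝ) B τ).clm_apply (hasDerivAt_const τ v)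

theorem exp_smul_apply_sub_self [CompleteSpace E] (B : E →L[ℝ] E) (v : E) (T : ℝ) :
    NormedSpace.exp (T • B) v - v = ∫ τ in (0:ℝ)..T, NormedSpace.exp (τ • B) (B v) := by
  have hcont : Continuous fun τ : ℝ => NormedSpace.exp (τ • B) (B v) :=
    continuous_iff_continuousAt.2 fun τ => (hasDerivAt_exp_smul_apply B (B v) τ).continuousAt
  rw [intervalIntegral.integral_eq_sub_of_hasDerivAt (fun τ _ => hasDerivAt_exp_smul_apply B v τ)
    (hcont.intervalIntegrable _ _), zero_smul, NormedSpace.exp_zero, one_apply_eq_self]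

variable {B : E →L[ℝ] E} {γ : ℝ}

theorem norm_exp_smul_apply_le_s15 (hB : ∀ t : ℝ, 0 ≤ t → ‖NormedSpace.exp (t • B)‖ ≤ exp (-γ * t))
    {t : ℝ} (ht : 0 ≤ t) (v : E) : ‖NormedSpace.exp (t • B) v‖ ≤ ‖v‖ * exp (-(γ * t)) := by
  rw [mul_comm, ← neg_mul]
  exact (NormedSpace.exp (t • B)).le_of_opNorm_le (hB t ht) v

theorem norm_exp_smul_apply_sub_self_le [CompleteSpace E] (hγ : γ ≠ 0)
    (hB : ∀ t : ℝ, 0 ≤ t → ‖NormedSpace.exp (t • B)‖ ≤ exp (-γ * t)) (v : E) {T : ℝ} (hT : 0 ≤ T) :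
    ‖NormedSpace.exp (T • B) v - v‖ ≤ ‖B v‖ * ((1 - exp (-(γ * T))) / γ) := by
  rw [exp_smul_apply_sub_self]
  exact norm_intervalIntegral_le_of_norm_le_exp_neg hγ hT
    fun τ hτ => norm_exp_smul_apply_le_s15 hB hτ.1.le (B v)

theorem norm_smul_integral_exp_smul_sub_apply_le {ε MV : ℝ} (hγ : γ ≠ 0) (hε : 0 < ε)
    (hB : ∀ t : ℝ, 0 ≤ t → ‖NormedSpace.exp (t • B)‖ ≤ exp (-γ * t)) {g : ℝ → E}
    (hg : ∀ s : ℝ, 0 ≤ s → ‖g s‖ ≤ MV) {t : ℝ} (ht : 0 ≤ t) :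
    ‖ε • ∫ s in (0:ℝ)..t, NormedSpace.exp ((ε * (t - s)) • B) (g s)‖
      ≤ MV * (1 - exp (-(ε * γ * t))) / γ := by
  have hsubst : ∫ s in (0:ℝ)..t, NormedSpace.exp ((ε * (t - s)) • B) (g s)
      = ∫ u in (0:ℝ)..t, NormedSpace.exp ((ε * u) • B) (g (t - u)) := by
    simpa using intervalIntegral.integral_comp_sub_left (a := 0) (b := t)
      (fun u => NormedSpace.exp ((ε * u) • B) (g (t - u))) t
  have hintegrand : ∀ u ∈ Ioc 0 t,
      ‖NormedSpace.exp ((ε * u) • B) (g (t - u))‖ ≤ MV * exp (-(ε * γ * u)) := fun u hu =>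
    calc ‖NormedSpace.exp ((ε * u) • B) (g (t - u))‖
        ≤ ‖g (t - u)‖ * exp (-(γ * (ε * u))) := norm_exp_smul_apply_le_s15 hB (by nlinarith [hu.1]) _
      _ ≤ MV * exp (-(ε * γ * u)) := by
        rw [mul_left_comm, ← mul_assoc]
        exact mul_le_mul_of_nonneg_right (hg _ (by linarith [hu.2])) (exp_pos _).le
  calc ‖ε • ∫ s in (0:ℝ)..t, NormedSpace.exp ((ε * (t - s)) • B) (g s)‖
      ≤ ε * (MV * ((1 - exp (-(ε * γ * t))) / (ε * γ))) := by
        rw [hsubst, norm_smul, Real.norm_of_nonneg hε.le]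
        gcongr
        exact norm_intervalIntegral_le_of_norm_le_exp_neg (mul_ne_zero hε.ne' hγ) ht hintegrand
    _ = MV * (1 - exp (-(ε * γ * t))) / γ := by field_simp
end

theorem reduced_slow_variable_estimate_general (m : ℕ)
    (γ₃ ε MV : ℝ) (hγ₃ : 0 < γ₃) (hε : 0 < ε)
    (B : EuclideanSpace ℝ (Fin m) →L[ℝ] EuclideanSpace ℝ (Fin m))
    (hB : ∀ t : ℝ, 0 ≤ t → ‖NormedSpace.exp (t • B)‖ ≤ Real.exp (-γ₃ * t))
    (v₀ : EuclideanSpace ℝ (Fin m))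
    (g : ℝ → EuclideanSpace ℝ (Fin m))
    (hgbd : ∀ s : ℝ, 0 ≤ s → ‖g s‖ ≤ MV)
    (vt : ℝ → EuclideanSpace ℝ (Fin m))
    (hvt : ∀ t : ℝ, 0 ≤ t →
      vt t = NormedSpace.exp ((ε * t) • B) v₀ +
        ε • ∫ s in (0:ℝ)..t, NormedSpace.exp ((ε * (t - s)) • B) (g s)) :
    ∀ t : ℝ, 0 ≤ t →
      ‖vt t - v₀‖ ≤ (‖B v₀‖ + MV) / γ₃ * (1 - Real.exp (-(ε * γ₃ * t))) := by
  intro t ht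
  have hfree := norm_exp_smul_apply_sub_self_le hγ₃.ne' hB v₀ (by positivity : 0 ≤ ε * t)
  rw [show γ₃ * (ε * t) = ε * γ₃ * t by ring] at hfree
  have hforced := norm_smul_integral_exp_smul_sub_apply_le hγ₃.ne' hε hB hgbd ht
  rw [hvt t ht, add_sub_right_comm]
  calc _ ≤ _ := norm_add_le _ _
    _ ≤ _ := add_le_add hfree hforced
    _ = _ := by ring

/-- estimate (5.7) in the proof of Theorem 5.2. Let `B` be a real `m × m`
matrix with `‖e^{Bt}‖ ≤ e^{-γ₃ t}` for all `t ≥ 0` (`γ₃ > 0`), let `ε > 0`, `M_V ≥ 0`,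
`v₀ ∈ ℝᵐ`, and let `g` be Borel measurable with `‖g(s)‖ ≤ M_V` for all `s ≥ 0`. If
`ṽ_t = e^{ε B t} v₀ + ε ∫₀ᵗ e^{ε B (t-s)} g(s) ds` for all `t ≥ 0`, then
`‖ṽ_t - v₀‖ ≤ ((‖B v₀‖ + M_V)/γ₃) (1 - e^{-ε γ₃ t})` for all `t ≥ 0`. -/
theorem reduced_slow_variable_estimate (m : ℕ)
    (γ₃ ε MV : ℝ) (hγ₃ : 0 < γ₃) (hε : 0 < ε) (hMV : 0 ≤ MV)
    (B : EuclideanSpace ℝ (Fin m) →L[ℝ] EuclideanSpace ℝ (Fin m))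
    (hB : ∀ t : ℝ, 0 ≤ t → ‖NormedSpace.exp (t • B)‖ ≤ Real.exp (-γ₃ * t))
    (v₀ : EuclideanSpace ℝ (Fin m))
    (g : ℝ → EuclideanSpace ℝ (Fin m)) (hg : Measurable g)
    (hgbd : ∀ s : ℝ, 0 ≤ s → ‖g s‖ ≤ MV)
    (vt : ℝ → EuclideanSpace ℝ (Fin m))
    (hvt : ∀ t : ℝ, 0 ≤ t →
      vt t = NormedSpace.exp ((ε * t) • B) v₀ +
        ε • ∫ s in (0:ℝ)..t, NormedSpace.exp ((ε * (t - s)) • B) (g s)) :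
    ∀ t : ℝ, 0 ≤ t →
      ‖vt t - v₀‖ ≤ (‖B v₀‖ + MV) / γ₃ * (1 - Real.exp (-(ε * γ₃ * t))) :=
  reduced_slow_variable_estimate_general m γ₃ ε MV hγ₃ hε B hB v₀ g hgbd vt hvt
end
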